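/- arXiv:2310.18476 — 5 statements merged into one kernel-verified Lean document; each statement's English description precedes it below -/
import Mathlib

section
/- Let Φ : ℝ≥0 → ℝ≥0 be convex with derivative φ, extended to the odd function φ(t)·sign(t) on ℝ, and write a(t)t = φ(t) for t ≠ 0. Then for all real numbers s, t: Φ(|s|) + Φ(|t|) ≤ 2 Φ(|s+t|/2) + (φ(|s|)·sign(s))·(s−t)/2 + (φ(|t|)·sign(t))·(t−s)/2. Equivalently, (1/2)(φ(|s|)sign(s) − φ(|t|)sign(t))(s − t) ≥ Φ(|s|) + Φ(|t|) − 2Φ(|s+t|/2). -/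
/-!
`φ(|x|) sign x` is a subgradient of the even function `x ↦ Φ |x|` at every `x`: for `x ≠ 0`
this is the tangent line of `Φ` at `|x|` together with `φ ≥ 0` (a monotone convex function has
nonnegative derivative), and at `x = 0` it is the monotonicity of `Φ`. Adding the subgradient
inequalities at `s` and at `t`, both tested against the midpoint `(s + t) / 2`, gives the claim.
-/

open Set

namespace Real

theorem sign_mul_self_eq_abs (r : ℝ) : sign r * r = |r| := by
  rcases lt_trichotomy r 0 with hr | rfl | hr
  · rw [sign_of_neg hr, abs_of_neg hr, neg_one_mul]
  · simp
  · rw [sign_of_pos hr, abs_of_pos hr, one_mul]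

theorem sign_mul_le_abs (r y : ℝ) : sign r * y ≤ |y| := by
  rcases sign_apply_eq r with h | h | h <;> rw [h]
  · simpa using neg_le_abs y
  · simp
  · simpa using le_abs_self y

end Real

theorem ConvexOn.add_mul_sub_le_of_hasDerivAt {S : Set ℝ} {f : ℝ → ℝ} {f' x z : ℝ}
    (hf : ConvexOn ℝ S f) (hx : x ∈ S) (hz : z ∈ S) (hd : HasDerivAt f f' x) :
    f x + f' * (z - x) ≤ f z := by
  rcases lt_trichotomy z x with hzx | rfl | hxz
  · have h := hf.slope_le_of_hasDerivAt hz hx hzx hd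
    rw [slope_def_field, div_le_iff₀ (sub_pos.mpr hzx)] at h
    linarith
  · simp
  · have h := hf.le_slope_of_hasDerivAt hx hz hxz hd
    rw [slope_def_field, le_div_iff₀ (sub_pos.mpr hxz)] at h
    linarith

section AbsComp

variable {Φ φ : ℝ → ℝ}

theorem deriv_nonneg_of_convexOn_Ici_of_monotoneOn (hconv : ConvexOn ℝ (Ici 0) Φ)
    (hmono : MonotoneOn Φ (Ici 0)) (hderiv : ∀ t > (0 : ℝ), HasDerivAt Φ (φ t) t)
    {x : ℝ} (hx : 0 < x) : 0 ≤ φ x := by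
  have tangent := hconv.add_mul_sub_le_of_hasDerivAt hx.le self_mem_Ici (hderiv x hx)
  have : Φ 0 ≤ Φ x := hmono self_mem_Ici hx.le hx.le
  exact nonneg_of_mul_nonneg_left (by linarith) hx

theorem comp_abs_sub_comp_abs_le_of_convexOn_Ici (hconv : ConvexOn ℝ (Ici 0) Φ)
    (hmono : MonotoneOn Φ (Ici 0)) (hderiv : ∀ t > (0 : ℝ), HasDerivAt Φ (φ t) t)
    (x y : ℝ) : Φ |x| - Φ |y| ≤ φ |x| * Real.sign x * (x - y) := by
  rcases eq_or_ne x 0 with rfl | hx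
  · simpa using hmono self_mem_Ici (abs_nonneg y) (abs_nonneg y)
  have hx' : 0 < |x| := abs_pos.mpr hx
  have tangent := hconv.add_mul_sub_le_of_hasDerivAt hx'.le (abs_nonneg y) (hderiv |x| hx')
  have hφ := deriv_nonneg_of_convexOn_Ici_of_monotoneOn hconv hmono hderiv hx'
  have hsign : φ |x| * (Real.sign x * y) ≤ φ |x| * |y| :=
    mul_le_mul_of_nonneg_left (Real.sign_mul_le_abs x y) hφ
  calc Φ |x| - Φ |y| ≤ φ |x| * (|x| - |y|) := by linarith
    _ ≤ φ |x| * (Real.sign x * x - Real.sign x * y) := by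
        rw [Real.sign_mul_self_eq_abs]; linarith
    _ = φ |x| * Real.sign x * (x - y) := by ring

end AbsComp

theorem stmt_7_general (Φ φ : ℝ → ℝ)
    (hconv : ConvexOn ℝ (Set.Ici 0) Φ)
    (hmono : StrictMonoOn Φ (Set.Ici 0))
    (hderiv : ∀ t > (0:ℝ), HasDerivAt Φ (φ t) t) :
    ∀ s t : ℝ,
      Φ |s| + Φ |t| ≤ 2 * Φ (|s + t| / 2)
        + (φ |s| * Real.sign s) * (s - t) / 2
        + (φ |t| * Real.sign t) * (t - s) / 2 ∧
      (1 / 2) * ((φ |s| * Real.sign s - φ |t| * Real.sign t) * (s - t))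
        ≥ Φ |s| + Φ |t| - 2 * Φ (|s + t| / 2) := by
  intro s t
  have hs := comp_abs_sub_comp_abs_le_of_convexOn_Ici hconv hmono.monotoneOn hderiv s ((s + t) / 2)
  have ht := comp_abs_sub_comp_abs_le_of_convexOn_Ici hconv hmono.monotoneOn hderiv t ((s + t) / 2)
  rw [abs_div, abs_two] at hs ht
  constructor <;> linarith

/-- Pointwise convexity inequality (relation (3.13) of the paper):
for the odd extension `φ̃(t) = φ(|t|)·sign(t)` of the derivative of `Φ`,
`Φ(|s|) + Φ(|t|) ≤ 2Φ(|s+t|/2) + φ̃(s)(s−t)/2 + φ̃(t)(t−s)/2`, and the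
equivalent monotonicity form. -/
theorem stmt_7 (Φ φ : ℝ → ℝ)
    (hconv : ConvexOn ℝ (Set.Ici 0) Φ)
    (hmono : StrictMonoOn Φ (Set.Ici 0))
    (hΦ0 : Φ 0 = 0)
    (hderiv : ∀ t > (0:ℝ), HasDerivAt Φ (φ t) t) :
    ∀ s t : ℝ,
      Φ |s| + Φ |t| ≤ 2 * Φ (|s + t| / 2)
        + (φ |s| * Real.sign s) * (s - t) / 2
        + (φ |t| * Real.sign t) * (t - s) / 2 ∧
      (1 / 2) * ((φ |s| * Real.sign s - φ |t| * Real.sign t) * (s - t))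
        ≥ Φ |s| + Φ |t| - 2 * Φ (|s + t| / 2) :=
  stmt_7_general Φ φ hconv hmono hderiv
end

section
/- Let Φ : ℝ≥0 → ℝ≥0 be an increasing continuous convex function with Φ(0)=0 such that t ↦ Φ(√t) is convex. Then for all real numbers s, t: (1/2)(Φ(|s|) + Φ(|t|)) ≥ Φ(|s+t|/2) + Φ(|s−t|/2). -/
/-!
Write `Ψ t = Φ (√t)`, so that `Φ |x| = Ψ (x²)`. A convex function `f` on `[0, ∞)` with `f 0 ≤ 0`
is superadditive, and `((s + t) / 2)² + ((s - t) / 2)² = (s² + t²) / 2`; hence the left-hand side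
is at most `Ψ ((s² + t²) / 2)`, which midpoint convexity of `Ψ` bounds by `(Ψ (s²) + Ψ (t²)) / 2`.
-/

open Set

namespace ConvexOn

variable {f : ℝ → ℝ}

lemma map_mul_le_mul (hf : ConvexOn ℝ (Ici 0) f) (hf0 : f 0 ≤ 0) {x t : ℝ} (hx : 0 ≤ x)
    (ht₀ : 0 ≤ t) (ht₁ : t ≤ 1) : f (t * x) ≤ t * f x := by
  have h := hf.2 (mem_Ici.2 hx) (mem_Ici.2 le_rfl) ht₀ (sub_nonneg.2 ht₁) (by ring)
  simp only [smul_eq_mul, mul_zero, add_zero] at h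
  nlinarith

lemma add_le_map_add (hf : ConvexOn ℝ (Ici 0) f) (hf0 : f 0 ≤ 0) {a b : ℝ} (ha : 0 ≤ a)
    (hb : 0 ≤ b) : f a + f b ≤ f (a + b) := by
  rcases (add_nonneg ha hb).eq_or_lt with hab | hab
  · obtain ⟨rfl, rfl⟩ : a = 0 ∧ b = 0 := ⟨by linarith, by linarith⟩
    simpa using hf0
  have hfa := hf.map_mul_le_mul hf0 hab.le (div_nonneg ha hab.le)
    (div_le_one_of_le₀ (le_add_of_nonneg_right hb) hab.le)
  have hfb := hf.map_mul_le_mul hf0 hab.le (div_nonneg hb hab.le)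
    (div_le_one_of_le₀ (le_add_of_nonneg_left ha) hab.le)
  rw [div_mul_cancel₀ _ hab.ne'] at hfa hfb
  calc f a + f b ≤ a / (a + b) * f (a + b) + b / (a + b) * f (a + b) := add_le_add hfa hfb
    _ = f (a + b) := by field_simp

lemma map_add_div_two_le (hf : ConvexOn ℝ (Ici 0) f) {x y : ℝ} (hx : 0 ≤ x) (hy : 0 ≤ y) :
    f ((x + y) / 2) ≤ (f x + f y) / 2 := by
  have h := hf.2 (mem_Ici.2 hx) (mem_Ici.2 hy) (by norm_num : (0 : ℝ) ≤ 1 / 2)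
    (by norm_num : (0 : ℝ) ≤ 1 / 2) (by norm_num)
  simp only [smul_eq_mul] at h
  rw [show (x + y) / 2 = 1 / 2 * x + 1 / 2 * y by ring]
  linarith

end ConvexOn

theorem stmt_8_general (Φ : ℝ → ℝ)
    (hΦ0 : Φ 0 = 0)
    (hsqrt : ConvexOn ℝ (Set.Ici 0) (fun t => Φ (Real.sqrt t))) :
    ∀ s t : ℝ, Φ (|s + t| / 2) + Φ (|s - t| / 2) ≤ (Φ |s| + Φ |t|) / 2 := by
  intro s t
  have hΦ_abs (x : ℝ) : Φ |x| = Φ (Real.sqrt (x ^ 2)) := by rw [Real.sqrt_sq_eq_abs]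
  have hhalf (x : ℝ) : |x| / 2 = |x / 2| := by rw [abs_div, abs_two]
  rw [hhalf, hhalf, hΦ_abs, hΦ_abs, hΦ_abs s, hΦ_abs t]
  calc Φ √(((s + t) / 2) ^ 2) + Φ √(((s - t) / 2) ^ 2)
      ≤ Φ √(((s + t) / 2) ^ 2 + ((s - t) / 2) ^ 2) :=
        hsqrt.add_le_map_add (by simp [hΦ0]) (sq_nonneg _) (sq_nonneg _)
    _ = Φ √((s ^ 2 + t ^ 2) / 2) := by congr 2; ring
    _ ≤ (Φ √(s ^ 2) + Φ √(t ^ 2)) / 2 := hsqrt.map_add_div_two_le (sq_nonneg _) (sq_nonneg _)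

/-- Clarkson-type inequality (relation (3.14)): if `Φ` is an increasing
continuous convex function with `Φ(0)=0` such that `t ↦ Φ(√t)` is convex, then
`(Φ(|s|)+Φ(|t|))/2 ≥ Φ(|s+t|/2) + Φ(|s−t|/2)`. -/
theorem stmt_8 (Φ : ℝ → ℝ)
    (hcont : ContinuousOn Φ (Set.Ici 0))
    (hconv : ConvexOn ℝ (Set.Ici 0) Φ)
    (hmono : StrictMonoOn Φ (Set.Ici 0))
    (hΦ0 : Φ 0 = 0)
    (hsqrt : ConvexOn ℝ (Set.Ici 0) (fun t => Φ (Real.sqrt t))) :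
    ∀ s t : ℝ, Φ (|s + t| / 2) + Φ (|s - t| / 2) ≤ (Φ |s| + Φ |t|) / 2 :=
  stmt_8_general Φ hΦ0 hsqrt
end

section
/- Let Φ be an N-function such that t ↦ Φ(√t) is convex, with derivative φ, and write φ̃(t) = φ(|t|)·sign(t). Then for all real s, t: (φ̃(s) − φ̃(t))·(s − t) ≥ 4 Φ(|s−t|/2). -/
/-!
Let `m = (s + t)/2`. The tangent lines of the even function `x ↦ Φ |x|` at `s` and at `t`, whose
slopes are `φ̃ s` and `φ̃ t`, lie below its graph at `m`; adding the two inequalities gives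
`Φ |s| + Φ |t| ≤ 2 Φ |m| + (φ̃ s - φ̃ t)(s - t)/2`. Since `g = Φ ∘ √` is convex with `g 0 = 0`, it
is superadditive, and applied to `((s+t)/2)² + ((s-t)/2)² = (s² + t²)/2` this yields the
Clarkson-type inequality `Φ |m| + Φ (|s - t|/2) ≤ (Φ |s| + Φ |t|)/2`. Combining both inequalities
cancels `Φ |s|`, `Φ |t|` and `Φ |m|`.
-/

open Filter Set

namespace ConvexOn

variable {S : Set ℝ} {f : ℝ → ℝ}

theorem add_deriv_mul_sub_le {f' x y : ℝ} (hf : ConvexOn ℝ S f) (hx : x ∈ S) (hy : y ∈ S)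
    (hf' : HasDerivAt f f' y) : f y + f' * (x - y) ≤ f x := by
  rcases lt_trichotomy x y with hxy | rfl | hxy
  · have h := hf.slope_le_of_hasDerivAt hx hy hxy hf'
    rw [slope_def_field, div_le_iff₀ (sub_pos.2 hxy)] at h
    linarith
  · simp
  · have h := hf.le_slope_of_hasDerivAt hy hx hxy hf'
    rw [slope_def_field, le_div_iff₀ (sub_pos.2 hxy)] at h
    linarith

theorem map_mul_le_mul_of_map_zero (hf : ConvexOn ℝ (Ici 0) f) (h0 : f 0 = 0) {c x : ℝ}
    (hc₀ : 0 ≤ c) (hc₁ : c ≤ 1) (hx : 0 ≤ x) : f (c * x) ≤ c * f x := by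
  have h := hf.2 (mem_Ici.2 le_rfl) (mem_Ici.2 hx) (sub_nonneg.2 hc₁) hc₀ (by ring)
  simpa [h0] using h

theorem add_le_map_add_of_map_zero (hf : ConvexOn ℝ (Ici 0) f) (h0 : f 0 = 0) {a b : ℝ}
    (ha : 0 ≤ a) (hb : 0 ≤ b) : f a + f b ≤ f (a + b) := by
  rcases (add_nonneg ha hb).eq_or_lt with hab | hab
  · obtain ⟨rfl, rfl⟩ : a = 0 ∧ b = 0 := ⟨by linarith, by linarith⟩
    simp [h0]
  · have hfa := hf.map_mul_le_mul_of_map_zero h0 (div_nonneg ha hab.le)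
      (div_le_one_of_le₀ (by linarith) hab.le) hab.le
    have hfb := hf.map_mul_le_mul_of_map_zero h0 (div_nonneg hb hab.le)
      (div_le_one_of_le₀ (by linarith) hab.le) hab.le
    rw [div_mul_cancel₀ _ hab.ne'] at hfa hfb
    calc f a + f b ≤ (a / (a + b) + b / (a + b)) * f (a + b) := by linarith
      _ = f (a + b) := by rw [← add_div, div_self hab.ne', one_mul]

end ConvexOn

section NFunction

variable {Φ φ : ℝ → ℝ}

theorem add_deriv_mul_sign_mul_sub_le_comp_abs (hconv : ConvexOn ℝ (Ici 0) Φ)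
    (hmono : MonotoneOn Φ (Ici 0)) (hderiv : ∀ t > (0 : ℝ), HasDerivAt Φ (φ t) t) (x y : ℝ) :
    Φ |y| + φ |y| * Real.sign y * (x - y) ≤ Φ |x| := by
  have tangent_abs : ∀ y > (0 : ℝ), ∀ x, Φ y + φ y * (x - y) ≤ Φ |x| := by
    intro y hy x
    have h₀ := hconv.add_deriv_mul_sub_le (mem_Ici.2 le_rfl) (mem_Ici.2 hy.le) (hderiv y hy)
    have hx := hconv.add_deriv_mul_sub_le (mem_Ici.2 (abs_nonneg x)) (mem_Ici.2 hy.le)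
      (hderiv y hy)
    have hΦ := hmono (mem_Ici.2 le_rfl) (mem_Ici.2 hy.le) hy.le
    have hφ : 0 ≤ φ y := nonneg_of_mul_nonneg_left (by linarith) hy
    nlinarith [le_abs_self x]
  rcases lt_trichotomy y 0 with hy | rfl | hy
  · have h := tangent_abs (-y) (neg_pos.2 hy) (-x)
    rw [abs_neg] at h
    rw [abs_of_neg hy, Real.sign_of_neg hy]
    linarith
  · simpa using hmono (mem_Ici.2 le_rfl) (mem_Ici.2 (abs_nonneg x)) (abs_nonneg x)
  · rw [abs_of_pos hy, Real.sign_of_pos hy, mul_one]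
    exact tangent_abs y hy x

theorem comp_abs_add_div_two_add_le (hΦ0 : Φ 0 = 0)
    (hsqrt : ConvexOn ℝ (Ici 0) (fun t => Φ (Real.sqrt t))) (s t : ℝ) :
    Φ (|s + t| / 2) + Φ (|s - t| / 2) ≤ (Φ |s| + Φ |t|) / 2 := by
  have hΦ : ∀ x : ℝ, Φ (|x| / 2) = Φ (Real.sqrt ((x / 2) ^ 2)) := fun x => by
    rw [Real.sqrt_sq_eq_abs, abs_div, abs_two]
  have hΦ' : ∀ x : ℝ, Φ |x| = Φ (Real.sqrt (x ^ 2)) := fun x => by rw [Real.sqrt_sq_eq_abs]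
  have hsuper := hsqrt.add_le_map_add_of_map_zero (by simpa using hΦ0)
    (sq_nonneg ((s + t) / 2)) (sq_nonneg ((s - t) / 2))
  have hmid := hsqrt.2 (mem_Ici.2 (sq_nonneg s)) (mem_Ici.2 (sq_nonneg t))
    (by norm_num : (0 : ℝ) ≤ 1 / 2) (by norm_num : (0 : ℝ) ≤ 1 / 2) (by norm_num)
  have hsum : ((s + t) / 2) ^ 2 + ((s - t) / 2) ^ 2 = 1 / 2 * s ^ 2 + 1 / 2 * t ^ 2 := by ring
  simp only [smul_eq_mul] at hmid
  rw [hsum] at hsuper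
  rw [hΦ, hΦ, hΦ' s, hΦ' t]
  linarith

end NFunction

theorem stmt_9_general (Φ φ : ℝ → ℝ)
    (hconv : ConvexOn ℝ (Set.Ici 0) Φ)
    (hmono : StrictMonoOn Φ (Set.Ici 0))
    (hΦ0 : Φ 0 = 0)
    (hderiv : ∀ t > (0:ℝ), HasDerivAt Φ (φ t) t)
    (hsqrt : ConvexOn ℝ (Set.Ici 0) (fun t => Φ (Real.sqrt t))) :
    ∀ s t : ℝ,
      4 * Φ (|s - t| / 2)
        ≤ (φ |s| * Real.sign s - φ |t| * Real.sign t) * (s - t) := by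
  intro s t
  have hs := add_deriv_mul_sign_mul_sub_le_comp_abs hconv hmono.monotoneOn hderiv ((s + t) / 2) s
  have ht := add_deriv_mul_sign_mul_sub_le_comp_abs hconv hmono.monotoneOn hderiv ((s + t) / 2) t
  have hclarkson := comp_abs_add_div_two_add_le hΦ0 hsqrt s t
  rw [abs_div, abs_two] at hs ht
  linear_combination 2 * hs + 2 * ht + 4 * hclarkson

/-- Monotonicity estimate (relation (3.15)): for an N-function `Φ` such that
`t ↦ Φ(√t)` is convex, with odd extension `φ̃(t) = φ(|t|)·sign(t)` of its
derivative, `(φ̃(s) − φ̃(t))(s − t) ≥ 4Φ(|s−t|/2)`. -/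
theorem stmt_9 (Φ φ : ℝ → ℝ)
    (hcont : ContinuousOn Φ (Set.Ici 0))
    (hconv : ConvexOn ℝ (Set.Ici 0) Φ)
    (hmono : StrictMonoOn Φ (Set.Ici 0))
    (hΦ0 : Φ 0 = 0)
    (hzero : Tendsto (fun t => Φ t / t) (nhdsWithin 0 (Set.Ioi 0)) (nhds 0))
    (hinfty : Tendsto (fun t => Φ t / t) atTop atTop)
    (hderiv : ∀ t > (0:ℝ), HasDerivAt Φ (φ t) t)
    (hsqrt : ConvexOn ℝ (Set.Ici 0) (fun t => Φ (Real.sqrt t))) :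
    ∀ s t : ℝ,
      4 * Φ (|s - t| / 2)
        ≤ (φ |s| * Real.sign s - φ |t| * Real.sign t) * (s - t) :=
  stmt_9_general Φ φ hconv hmono hΦ0 hderiv hsqrt
end

section
/- Let φ(t) = log(1+|t|)|t|^{p−2} t for t ∈ ℝ with p > 1, and Φ(t) = ∫₀ᵗ φ(τ) dτ for t ≥ 0. Then inf_{t>0} t φ(t)/Φ(t) = p and sup_{t>0} t φ(t)/Φ(t) = p + 1. -/
/-!
For `t > 0` the function is `φ(t) = log(1+t) t^(p-1)`. Differentiating `t φ(t) = log(1+t) t^p`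
and integrating gives `t φ(t) = p Φ(t) + E(t)` with `E(t) = ∫₀ᵗ τ^p/(1+τ) dτ`, so the
ratio is `p + E(t)/Φ(t)`. On `[0, t]` we have `τ^p/(1+τ) < φ(τ) ≤ τ^p ≤ (1+t) τ^p/(1+τ)`,
whence `1/(1+t) ≤ E(t)/Φ(t) < 1`: the supremum `p + 1` is approached as `t → 0`. Since `φ`
is increasing, `Φ(2t) ≥ t φ(t) = log(1+t) t^p`, while `E(2t) ≤ (2t)^p`; so
`E(2t)/Φ(2t) ≤ 2^p / log(1+t) → 0` and the infimum `p` is approached as `t → ∞`.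
-/

open Set Filter Topology intervalIntegral

lemma rpow_eq_rpow_sub_one_mul {x y : ℝ} (hx : 0 ≤ x) (hy : y ≠ 0) :
    x ^ y = x ^ (y - 1) * x := by
  rw [← Real.rpow_add_one' hx (by simpa using hy), sub_add_cancel]

lemma uIcc_subset_Ici_zero {a b : ℝ} (ha : 0 ≤ a) (hb : 0 ≤ b) : uIcc a b ⊆ Ici 0 :=
  fun _ hx => (le_min ha hb).trans hx.1

namespace SimonenkoLogExample

noncomputable def phi (p τ : ℝ) : ℝ := Real.log (1 + τ) * τ ^ (p - 1)

noncomputable def Phi (p t : ℝ) : ℝ := ∫ τ in (0 : ℝ)..t, phi p τ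

noncomputable def excess (p t : ℝ) : ℝ := ∫ τ in (0 : ℝ)..t, τ ^ p / (1 + τ)

variable {p τ t a b : ℝ}

lemma log_one_add_abs_mul_abs_rpow_mul_eq_phi (hτ : 0 ≤ τ) :
    Real.log (1 + |τ|) * |τ| ^ (p - 2) * τ = phi p τ := by
  rcases hτ.eq_or_lt with rfl | hτ
  · simp [phi]
  · rw [abs_of_pos hτ, mul_assoc, phi, ← Real.rpow_add_one hτ.ne']
    ring_nf

lemma phi_nonneg (hτ : 0 ≤ τ) : 0 ≤ phi p τ :=
  mul_nonneg (Real.log_nonneg (by linarith)) (Real.rpow_nonneg hτ _)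

lemma continuousOn_phi (hp : 1 ≤ p) : ContinuousOn (phi p) (Ici 0) :=
  (ContinuousOn.log (by fun_prop) fun τ (hτ : 0 ≤ τ) => by positivity).mul
    (Real.continuous_rpow_const (by linarith)).continuousOn

lemma monotoneOn_phi (hp : 1 ≤ p) : MonotoneOn (phi p) (Ici 0) :=
  fun a (ha : 0 ≤ a) b _ hab => by
    unfold phi
    gcongr
    exact Real.log_nonneg (by linarith)

lemma mul_phi_eq (hp : p ≠ 0) (hτ : 0 ≤ τ) : τ * phi p τ = Real.log (1 + τ) * τ ^ p := by
  rw [phi, rpow_eq_rpow_sub_one_mul hτ hp]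
  ring

lemma rpow_div_one_add_lt_phi (hp : p ≠ 0) (hτ : 0 < τ) : τ ^ p / (1 + τ) < phi p τ := by
  have hlog : τ / (1 + τ) < Real.log (1 + τ) := by
    refine lt_of_le_of_lt ?_ (Real.lt_log_one_add_of_pos hτ)
    rw [div_le_div_iff₀ (by linarith) (by linarith)]
    nlinarith
  rw [rpow_eq_rpow_sub_one_mul hτ.le hp, phi, mul_div_assoc, mul_comm]
  exact mul_lt_mul_of_pos_right hlog (Real.rpow_pos_of_pos hτ _)

lemma phi_le_rpow (hp : p ≠ 0) (hτ : 0 ≤ τ) : phi p τ ≤ τ ^ p := by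
  rw [rpow_eq_rpow_sub_one_mul hτ hp, phi, mul_comm]
  gcongr
  linarith [Real.log_le_sub_one_of_pos (x := 1 + τ) (by linarith)]

lemma rpow_div_one_add_le_rpow_sub_one (hp : p ≠ 0) (hτ : 0 ≤ τ) :
    τ ^ p / (1 + τ) ≤ τ ^ (p - 1) := by
  rw [div_le_iff₀ (by linarith), rpow_eq_rpow_sub_one_mul hτ hp]
  gcongr
  linarith

lemma continuousOn_rpow_div_one_add (hp : 0 ≤ p) :
    ContinuousOn (fun τ : ℝ => τ ^ p / (1 + τ)) (Ici 0) :=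
  (Real.continuous_rpow_const hp).continuousOn.div (by fun_prop) fun τ (hτ : 0 ≤ τ) => by
    positivity

lemma intervalIntegrable_phi (hp : 1 ≤ p) (ha : 0 ≤ a) (hb : 0 ≤ b) :
    IntervalIntegrable (phi p) MeasureTheory.volume a b :=
  ((continuousOn_phi hp).mono (uIcc_subset_Ici_zero ha hb)).intervalIntegrable

lemma intervalIntegrable_rpow_div_one_add (hp : 0 ≤ p) (ht : 0 ≤ t) :
    IntervalIntegrable (fun τ : ℝ => τ ^ p / (1 + τ)) MeasureTheory.volume 0 t :=
  ((continuousOn_rpow_div_one_add hp).mono (uIcc_subset_Ici_zero le_rfl ht)).intervalIntegrable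

theorem mul_phi_sub_mul_Phi (hp : 1 ≤ p) (ht : 0 ≤ t) :
    t * phi p t - p * Phi p t = excess p t := by
  have hderiv : ∀ τ ∈ Ioo 0 t, HasDerivAt (fun τ => Real.log (1 + τ) * τ ^ p)
      (τ ^ p / (1 + τ) + p * phi p τ) τ := by
    rintro τ ⟨hτ, -⟩
    have hlog : HasDerivAt (fun τ => Real.log (1 + τ)) (1 / (1 + τ)) τ := by
      simpa using ((hasDerivAt_id τ).const_add 1).log (by simp only [id]; positivity)
    exact (hlog.mul (Real.hasDerivAt_rpow_const (Or.inr hp))).congr_deriv (by rw [phi]; ring)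
  have hcont : ContinuousOn (fun τ => Real.log (1 + τ) * τ ^ p) (Icc 0 t) :=
    (continuousOn_id.mul (continuousOn_phi hp)).mono Icc_subset_Ici_self |>.congr
      fun τ hτ => (mul_phi_eq (by linarith) hτ.1).symm
  have hFTC := integral_eq_sub_of_hasDeriv_right_of_le ht hcont
    (fun τ hτ => (hderiv τ hτ).hasDerivWithinAt)
    ((intervalIntegrable_rpow_div_one_add (by linarith) ht).add
      ((intervalIntegrable_phi hp le_rfl ht).const_mul p))
  rw [integral_add (intervalIntegrable_rpow_div_one_add (by linarith) ht)
    ((intervalIntegrable_phi hp le_rfl ht).const_mul p), intervalIntegral.integral_const_mul,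
    add_zero, Real.log_one, zero_mul, sub_zero] at hFTC
  rw [mul_phi_eq (by linarith) ht, Phi, excess]
  linarith

lemma excess_pos (hp : 0 ≤ p) (ht : 0 < t) : 0 < excess p t :=
  intervalIntegral_pos_of_pos_on (intervalIntegrable_rpow_div_one_add hp ht.le)
    (fun τ hτ => by have := hτ.1; positivity) ht

lemma excess_lt_Phi (hp : 1 ≤ p) (ht : 0 < t) : excess p t < Phi p t :=
  integral_lt_integral_of_continuousOn_of_le_of_exists_lt ht
    ((continuousOn_rpow_div_one_add (by linarith)).mono Icc_subset_Ici_self)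
    ((continuousOn_phi hp).mono Icc_subset_Ici_self)
    (fun τ hτ => (rpow_div_one_add_lt_phi (by linarith) hτ.1).le)
    ⟨t, right_mem_Icc.2 ht.le, rpow_div_one_add_lt_phi (by linarith) ht⟩

lemma Phi_pos (hp : 1 ≤ p) (ht : 0 < t) : 0 < Phi p t :=
  (excess_pos (by linarith) ht).trans (excess_lt_Phi hp ht)

lemma Phi_le_one_add_mul_excess (hp : 1 ≤ p) (ht : 0 ≤ t) :
    Phi p t ≤ (1 + t) * excess p t := by
  rw [excess, ← intervalIntegral.integral_const_mul]
  refine integral_mono_on ht (intervalIntegrable_phi hp le_rfl ht)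
    ((intervalIntegrable_rpow_div_one_add (by linarith) ht).const_mul _)
    fun τ ⟨hτ, hτt⟩ => ?_
  calc phi p τ ≤ τ ^ p := phi_le_rpow (by linarith) hτ
    _ = (1 + τ) * (τ ^ p / (1 + τ)) := by field_simp
    _ ≤ (1 + t) * (τ ^ p / (1 + τ)) := by gcongr

lemma excess_le_rpow (hp : 1 ≤ p) (ht : 0 ≤ t) : excess p t ≤ t ^ p := by
  calc excess p t ≤ ∫ _ in (0 : ℝ)..t, t ^ (p - 1) :=
        integral_mono_on ht (intervalIntegrable_rpow_div_one_add (by linarith) ht)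
          intervalIntegrable_const fun τ ⟨hτ, hτt⟩ =>
            (rpow_div_one_add_le_rpow_sub_one (by linarith) hτ).trans
              (Real.rpow_le_rpow hτ hτt (by linarith))
    _ = t ^ p := by
        rw [intervalIntegral.integral_const, sub_zero, smul_eq_mul,
          rpow_eq_rpow_sub_one_mul (y := p) ht (by linarith), mul_comm]

lemma mul_phi_le_Phi_two_mul (hp : 1 ≤ p) (ht : 0 ≤ t) : t * phi p t ≤ Phi p (2 * t) := by
  have hint := intervalIntegrable_phi hp ht (by linarith : 0 ≤ 2 * t)
  rw [Phi, ← integral_add_adjacent_intervals (intervalIntegrable_phi hp le_rfl ht) hint]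
  have hfirst : 0 ≤ ∫ τ in (0 : ℝ)..t, phi p τ :=
    integral_nonneg ht fun τ hτ => phi_nonneg hτ.1
  have hsecond : ∫ _ in t..(2 * t), phi p t ≤ ∫ τ in t..(2 * t), phi p τ :=
    integral_mono_on (by linarith) intervalIntegrable_const hint fun τ hτ =>
      monotoneOn_phi hp ht (ht.trans hτ.1) hτ.1
  rw [intervalIntegral.integral_const, smul_eq_mul, show 2 * t - t = t by ring] at hsecond
  linarith

lemma mul_phi_div_Phi_eq (hp : 1 ≤ p) (ht : 0 < t) :
    t * phi p t / Phi p t = p + excess p t / Phi p t := by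
  rw [← mul_phi_sub_mul_Phi hp ht.le]
  field_simp [(Phi_pos hp ht).ne']
  ring

lemma inv_one_add_le_excess_div_Phi (hp : 1 ≤ p) (ht : 0 < t) :
    (1 + t)⁻¹ ≤ excess p t / Phi p t := by
  rw [le_div_iff₀ (Phi_pos hp ht), inv_mul_le_iff₀ (by linarith)]
  exact Phi_le_one_add_mul_excess hp ht.le

lemma excess_two_mul_div_Phi_le (hp : 1 ≤ p) (ht : 0 < t) :
    excess p (2 * t) / Phi p (2 * t) ≤ 2 ^ p / Real.log (1 + t) := by
  have hlog : 0 < Real.log (1 + t) := Real.log_pos (by linarith)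
  calc excess p (2 * t) / Phi p (2 * t) ≤ (2 * t) ^ p / (t * phi p t) :=
        div_le_div₀ (by positivity) (excess_le_rpow hp (by linarith))
          (by rw [mul_phi_eq (by linarith) ht.le]; positivity) (mul_phi_le_Phi_two_mul hp ht.le)
    _ = 2 ^ p / Real.log (1 + t) := by
        rw [mul_phi_eq (by linarith) ht.le, Real.mul_rpow (by norm_num) ht.le]
        field_simp [(Real.rpow_pos_of_pos ht p).ne']

lemma tendsto_excess_div_Phi_nhdsGT_zero (hp : 1 ≤ p) :
    Tendsto (fun t => excess p t / Phi p t) (𝓝[>] 0) (𝓝 1) := by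
  have hinv : Tendsto (fun t : ℝ => (1 + t)⁻¹) (𝓝[>] 0) (𝓝 1) := by
    have h : Tendsto (fun t : ℝ => 1 + t) (𝓝 0) (𝓝 (1 + 0)) :=
      tendsto_const_nhds.add tendsto_id
    simpa using tendsto_nhdsWithin_of_tendsto_nhds (h.inv₀ (by norm_num))
  refine tendsto_of_tendsto_of_tendsto_of_le_of_le' hinv tendsto_const_nhds ?_ ?_ <;>
    filter_upwards [self_mem_nhdsWithin] with t (ht : 0 < t)
  · exact inv_one_add_le_excess_div_Phi hp ht
  · exact (div_lt_one (Phi_pos hp ht)).2 (excess_lt_Phi hp ht) |>.le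

lemma tendsto_excess_two_mul_div_Phi_atTop (hp : 1 ≤ p) :
    Tendsto (fun t => excess p (2 * t) / Phi p (2 * t)) atTop (𝓝 0) := by
  have hbound : Tendsto (fun t => 2 ^ p / Real.log (1 + t)) atTop (𝓝 0) :=
    tendsto_const_nhds.div_atTop
      (Real.tendsto_log_atTop.comp (tendsto_atTop_add_const_left _ 1 tendsto_id))
  refine tendsto_of_tendsto_of_tendsto_of_le_of_le' tendsto_const_nhds hbound ?_ ?_ <;>
    filter_upwards [eventually_gt_atTop 0] with t ht
  · exact (div_pos (excess_pos (by linarith) (by linarith)) (Phi_pos hp (by linarith))).le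
  · exact excess_two_mul_div_Phi_le hp ht

theorem isGLB_mul_phi_div_Phi (hp : 1 ≤ p) :
    IsGLB ((fun t => t * phi p t / Phi p t) '' Ioi 0) p := by
  refine isGLB_of_mem_closure ?_ (mem_closure_of_tendsto
    (f := fun t => 2 * t * phi p (2 * t) / Phi p (2 * t)) (b := atTop) ?_ ?_)
  · rintro _ ⟨t, ht, rfl⟩
    simp only [mul_phi_div_Phi_eq hp ht]
    linarith [div_pos (excess_pos (by linarith) ht) (Phi_pos hp ht)]
  · have h := (tendsto_excess_two_mul_div_Phi_atTop hp).const_add p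
    rw [add_zero] at h
    refine h.congr' ?_
    filter_upwards [eventually_gt_atTop 0] with t ht
    exact (mul_phi_div_Phi_eq hp (by linarith)).symm
  · filter_upwards [eventually_gt_atTop 0] with t ht
    exact mem_image_of_mem _ (by simpa using ht)

theorem isLUB_mul_phi_div_Phi (hp : 1 ≤ p) :
    IsLUB ((fun t => t * phi p t / Phi p t) '' Ioi 0) (p + 1) := by
  refine isLUB_of_mem_closure ?_ (mem_closure_of_tendsto
    (f := fun t => t * phi p t / Phi p t) (b := 𝓝[>] 0) ?_ ?_)
  · rintro _ ⟨t, ht, rfl⟩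
    simp only [mul_phi_div_Phi_eq hp ht]
    linarith [(div_lt_one (Phi_pos hp ht)).2 (excess_lt_Phi hp ht)]
  · refine ((tendsto_excess_div_Phi_nhdsGT_zero hp).const_add p).congr' ?_
    filter_upwards [self_mem_nhdsWithin] with t (ht : 0 < t)
    exact (mul_phi_div_Phi_eq hp ht).symm
  · filter_upwards [self_mem_nhdsWithin] with t ht
    exact mem_image_of_mem _ ht

end SimonenkoLogExample

/-- Example 2: for `φ(t) = log(1+|t|)|t|^{p−2}t` with `p > 1`, the Simonenko
indices of `Φ(t) = ∫₀ᵗ φ` are `φ⁻ = p` and `φ⁺ = p + 1`. -/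
theorem stmt_16 (p : ℝ) (hp : 1 < p)
    (φ Φ : ℝ → ℝ)
    (hφ : ∀ t : ℝ, φ t = Real.log (1 + |t|) * |t| ^ (p - 2) * t)
    (hΦ : ∀ t : ℝ, Φ t = ∫ τ in (0:ℝ)..t, φ τ) :
    sInf ((fun t => t * φ t / Φ t) '' Set.Ioi (0:ℝ)) = p ∧
    sSup ((fun t => t * φ t / Φ t) '' Set.Ioi (0:ℝ)) = p + 1 := by
  have hφ_eq : ∀ τ, 0 ≤ τ → φ τ = SimonenkoLogExample.phi p τ := fun τ hτ =>
    (hφ τ).trans (SimonenkoLogExample.log_one_add_abs_mul_abs_rpow_mul_eq_phi hτ)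
  have hΦ_eq : ∀ t, 0 ≤ t → Φ t = SimonenkoLogExample.Phi p t := fun t ht =>
    (hΦ t).trans (integral_congr fun τ hτ => hφ_eq τ (uIcc_subset_Ici_zero le_rfl ht hτ))
  have hS : (fun t => t * φ t / Φ t) '' Ioi 0 =
      (fun t => t * SimonenkoLogExample.phi p t / SimonenkoLogExample.Phi p t) '' Ioi 0 :=
    image_congr fun t (ht : 0 < t) => by rw [hφ_eq t ht.le, hΦ_eq t ht.le]
  rw [hS]
  exact ⟨(SimonenkoLogExample.isGLB_mul_phi_div_Phi hp.le).csInf_eq (nonempty_Ioi.image _),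
    (SimonenkoLogExample.isLUB_mul_phi_div_Phi hp.le).csSup_eq (nonempty_Ioi.image _)⟩
end

section
/- Let φ(t) = |t|^{p−2} t / log(1+|t|) for t ≠ 0 and φ(0) = 0, where p > 2, and let Φ(t) = ∫₀ᵗ φ(τ) dτ. Then inf_{t>0} t φ(t)/Φ(t) = p − 1 and sup_{t>0} t φ(t)/Φ(t) = p. -/
/-!
Write `L(t) = log (1 + t)`, so that `φ(t) = t^(p-1) / L(t)` and `t φ(t) / Φ(t) = t^p / (L(t) Φ(t))`
for `t > 0`. As `L` is concave with `L(0) = 0`, `τ / L(τ)` increases, hence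
`φ(τ) ≤ (t / L(t)) τ^(p-2)` on `(0, t]` and `(p - 1) Φ(t) ≤ t^p / L(t)`; monotonicity of `L` gives
`t^p / L(t) ≤ p Φ(t)`. Near `0`, `L(t) ≈ t` and `φ(τ) ≥ τ^(p-2)` push the ratio down to `p - 1`.
Near `∞`, bounding `φ` by `(s / L(s)) τ^(p-2)` below `s = t^θ` and by `τ^(p-1) / L(s)` above it,
together with `L(t^θ) ≥ θ L(t)`, bounds the ratio below by `θ / (t^(θ-1) / (p - 1) + 1 / p) → θ p`,
for every `θ < 1`.
-/

open Set Real Filter Topology MeasureTheory intervalIntegral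

noncomputable def powDivLog (p t : ℝ) : ℝ := t ^ (p - 1) / log (1 + t)

noncomputable def indexRatio (φ : ℝ → ℝ) (t : ℝ) : ℝ := t * φ t / ∫ τ in (0:ℝ)..t, φ τ

lemma log_one_add_pos {t : ℝ} (ht : 0 < t) : 0 < log (1 + t) := log_pos (by linarith)

lemma mul_log_one_add_le {τ t : ℝ} (hτ : 0 < τ) (hτt : τ ≤ t) :
    τ * log (1 + t) ≤ t * log (1 + τ) := by
  rcases hτt.eq_or_lt with rfl | hlt
  · rfl
  have key := strictConcaveOn_log_Ioi.secant_strict_mono (a := 1) (x := 1 + τ) (y := 1 + t)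
    (by simp) (by simp; linarith) (by simp; linarith) (by simp; linarith) (by simp; linarith)
    (by linarith)
  simp only [log_one, sub_zero, add_sub_cancel_left] at key
  rw [div_lt_div_iff₀ (by linarith) hτ] at key
  linarith

lemma mul_log_one_add_le_log_one_add_rpow {t θ : ℝ} (ht : 0 ≤ t) (hθ0 : 0 ≤ θ) (hθ1 : θ ≤ 1) :
    θ * log (1 + t) ≤ log (1 + t ^ θ) := by
  rw [← log_rpow (by linarith)]
  gcongr
  simpa using rpow_add_le_add_rpow zero_le_one ht hθ0 hθ1

lemma integral_zero_const_mul_rpow {r : ℝ} (hr : -1 < r) (c t : ℝ) :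
    ∫ τ in (0:ℝ)..t, c * τ ^ r = c * (t ^ (r + 1) / (r + 1)) := by
  rw [intervalIntegral.integral_const_mul, integral_rpow (Or.inl hr), zero_rpow (by linarith),
    sub_zero]

namespace powDivLog

variable {p τ t : ℝ}

lemma mul_self_eq (ht : 0 < t) : t * powDivLog p t = t ^ p / log (1 + t) := by
  rw [powDivLog, rpow_sub_one ht.ne']
  field_simp

lemma le_div_mul_rpow (hτ : 0 < τ) (hτt : τ ≤ t) :
    powDivLog p τ ≤ t / log (1 + t) * τ ^ (p - 2) := by
  have hLτ := log_one_add_pos hτ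
  have hLt := log_one_add_pos (hτ.trans_le hτt)
  rw [powDivLog, div_mul_eq_mul_div, div_le_div_iff₀ hLτ hLt,
    show p - 1 = (p - 2) + 1 by ring, rpow_add_one hτ.ne']
  have := mul_log_one_add_le hτ hτt
  have : 0 ≤ τ ^ (p - 2) := by positivity
  nlinarith

lemma le_inv_mul_rpow {s : ℝ} (hs : 0 < s) (hsτ : s ≤ τ) :
    powDivLog p τ ≤ (log (1 + s))⁻¹ * τ ^ (p - 1) := by
  rw [powDivLog, inv_mul_eq_div]
  exact div_le_div_of_nonneg_left (rpow_nonneg (hs.le.trans hsτ) _) (log_one_add_pos hs)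
    (by gcongr)

lemma inv_mul_rpow_le (hτ : 0 < τ) (hτt : τ ≤ t) :
    (log (1 + t))⁻¹ * τ ^ (p - 1) ≤ powDivLog p τ := by
  rw [powDivLog, inv_mul_eq_div]
  exact div_le_div_of_nonneg_left (by positivity) (log_one_add_pos hτ) (by gcongr)

lemma rpow_sub_two_le (hτ : 0 < τ) : τ ^ (p - 2) ≤ powDivLog p τ := by
  rw [powDivLog, le_div_iff₀ (log_one_add_pos hτ)]
  calc τ ^ (p - 2) * log (1 + τ) ≤ τ ^ (p - 2) * τ := by
        gcongr
        simpa using log_le_sub_one_of_pos (x := 1 + τ) (by linarith)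
    _ = τ ^ (p - 1) := by rw [← rpow_add_one hτ.ne']; ring_nf

lemma measurable : Measurable (powDivLog p) := by
  unfold powDivLog; fun_prop

lemma intervalIntegrable (hp : 1 < p) {a b : ℝ} (ha : 0 ≤ a) (hb : 0 ≤ b) :
    IntervalIntegrable (powDivLog p) volume a b := by
  suffices h : ∀ b, 0 ≤ b → IntervalIntegrable (powDivLog p) volume 0 b from
    (h a ha).symm.trans (h b hb)
  intro b hb
  refine IntervalIntegrable.mono_fun' (g := fun τ => b / log (1 + b) * τ ^ (p - 2))
    ((intervalIntegrable_rpow' (by linarith)).const_mul _) measurable.aestronglyMeasurable ?_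
  rw [uIoc_of_le hb]
  filter_upwards [ae_restrict_mem measurableSet_Ioc] with τ ⟨hτ, hτb⟩
  rw [norm_of_nonneg (by have := log_one_add_pos hτ; unfold powDivLog; positivity)]
  exact le_div_mul_rpow hτ hτb

lemma rpow_le_mul_integral (hp : 1 < p) (ht : 0 < t) :
    t ^ (p - 1) ≤ (p - 1) * ∫ τ in (0:ℝ)..t, powDivLog p τ := by
  have hint : ∫ τ in (0:ℝ)..t, 1 * τ ^ (p - 2) = t ^ (p - 1) / (p - 1) := by
    rw [integral_zero_const_mul_rpow (by linarith), show p - 2 + 1 = p - 1 by ring, one_mul]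
  have hmono : ∫ τ in (0:ℝ)..t, 1 * τ ^ (p - 2) ≤ ∫ τ in (0:ℝ)..t, powDivLog p τ :=
    integral_mono_on_of_le_Ioo ht.le
      ((intervalIntegrable_rpow' (by linarith)).const_mul 1) (intervalIntegrable hp le_rfl ht.le)
      fun τ hτ => (one_mul (τ ^ (p - 2))).trans_le (rpow_sub_two_le hτ.1)
  rw [hint, div_le_iff₀ (by linarith)] at hmono
  linarith

lemma integral_pos (hp : 1 < p) (ht : 0 < t) : 0 < ∫ τ in (0:ℝ)..t, powDivLog p τ := by
  have := rpow_le_mul_integral hp ht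
  have : 0 < t ^ (p - 1) := by positivity
  nlinarith

lemma mul_integral_le (hp : 1 < p) (ht : 0 < t) :
    (p - 1) * ∫ τ in (0:ℝ)..t, powDivLog p τ ≤ t ^ p / log (1 + t) := by
  calc (p - 1) * ∫ τ in (0:ℝ)..t, powDivLog p τ
      ≤ (p - 1) * ∫ τ in (0:ℝ)..t, t / log (1 + t) * τ ^ (p - 2) := by
        gcongr
        exact integral_mono_on_of_le_Ioo ht.le (intervalIntegrable hp le_rfl ht.le)
          ((intervalIntegrable_rpow' (by linarith)).const_mul _)
          fun τ hτ => le_div_mul_rpow hτ.1 hτ.2.le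
    _ = t ^ p / log (1 + t) := by
        rw [integral_zero_const_mul_rpow (by linarith), show p - 2 + 1 = p - 1 by ring,
          rpow_sub_one ht.ne']
        have : p - 1 ≠ 0 := by linarith
        field_simp

lemma le_mul_integral (hp : 1 < p) (ht : 0 < t) :
    t ^ p / log (1 + t) ≤ p * ∫ τ in (0:ℝ)..t, powDivLog p τ := by
  calc t ^ p / log (1 + t) = p * ∫ τ in (0:ℝ)..t, (log (1 + t))⁻¹ * τ ^ (p - 1) := by
        rw [integral_zero_const_mul_rpow (by linarith), sub_add_cancel]
        field_simp
    _ ≤ p * ∫ τ in (0:ℝ)..t, powDivLog p τ := by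
        gcongr
        exact integral_mono_on_of_le_Ioo ht.le
          ((intervalIntegrable_rpow' (by linarith)).const_mul _) (intervalIntegrable hp le_rfl ht.le)
          fun τ hτ => inv_mul_rpow_le hτ.1 hτ.2.le

lemma integral_le_div_log (hp : 1 < p) (ht : 0 < t) {s : ℝ} (hs : 0 < s) :
    ∫ τ in (0:ℝ)..t, powDivLog p τ ≤ (s * t ^ (p - 1) / (p - 1) + t ^ p / p) / log (1 + s) := by
  have hbound : ∀ τ ∈ Ioo 0 t,
      powDivLog p τ ≤ s / log (1 + s) * τ ^ (p - 2) + (log (1 + s))⁻¹ * τ ^ (p - 1) := by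
    intro τ ⟨hτ, _⟩
    have hLs := log_one_add_pos hs
    rcases le_total τ s with hτs | hsτ
    · have : 0 ≤ (log (1 + s))⁻¹ * τ ^ (p - 1) := by positivity
      linarith [le_div_mul_rpow (p := p) hτ hτs]
    · have : 0 ≤ s / log (1 + s) * τ ^ (p - 2) := by positivity
      linarith [le_inv_mul_rpow (p := p) hs hsτ]
  calc ∫ τ in (0:ℝ)..t, powDivLog p τ
      ≤ ∫ τ in (0:ℝ)..t, (s / log (1 + s) * τ ^ (p - 2) + (log (1 + s))⁻¹ * τ ^ (p - 1)) :=
        integral_mono_on_of_le_Ioo ht.le (intervalIntegrable hp le_rfl ht.le)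
          (((intervalIntegrable_rpow' (by linarith)).const_mul _).add
            ((intervalIntegrable_rpow' (by linarith)).const_mul _)) hbound
    _ = (s * t ^ (p - 1) / (p - 1) + t ^ p / p) / log (1 + s) := by
        rw [integral_add ((intervalIntegrable_rpow' (by linarith)).const_mul _)
            ((intervalIntegrable_rpow' (by linarith)).const_mul _),
          integral_zero_const_mul_rpow (by linarith), integral_zero_const_mul_rpow (by linarith),
          show p - 2 + 1 = p - 1 by ring, sub_add_cancel]
        ring

lemma indexRatio_eq (ht : 0 < t) : indexRatio (powDivLog p) t =
    t ^ p / (log (1 + t) * ∫ τ in (0:ℝ)..t, powDivLog p τ) := by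
  rw [indexRatio, mul_self_eq ht, div_div]

lemma sub_one_le_indexRatio (hp : 1 < p) (ht : 0 < t) : p - 1 ≤ indexRatio (powDivLog p) t := by
  rw [indexRatio_eq ht, ← div_div, le_div_iff₀ (integral_pos hp ht)]
  exact mul_integral_le hp ht

lemma indexRatio_le (hp : 1 < p) (ht : 0 < t) : indexRatio (powDivLog p) t ≤ p := by
  rw [indexRatio_eq ht, ← div_div, div_le_iff₀ (integral_pos hp ht)]
  exact le_mul_integral hp ht

lemma indexRatio_le_mul_add_two_div_two (hp : 1 < p) (ht : 0 < t) :
    indexRatio (powDivLog p) t ≤ (p - 1) * ((t + 2) / 2) := by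
  have hLt := log_one_add_pos ht
  have hlog : t / log (1 + t) ≤ (t + 2) / 2 := by
    have := le_log_one_add_of_nonneg ht.le
    rw [div_le_iff₀ (by linarith)] at this
    rw [div_le_iff₀ hLt]
    linarith
  rw [indexRatio_eq ht, ← div_div, div_le_iff₀ (integral_pos hp ht)]
  calc t ^ p / log (1 + t) = t / log (1 + t) * t ^ (p - 1) := by
        rw [rpow_sub_one ht.ne']
        field_simp
    _ ≤ (t + 2) / 2 * ((p - 1) * ∫ τ in (0:ℝ)..t, powDivLog p τ) := by
        gcongr
        exact rpow_le_mul_integral hp ht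
    _ = _ := by ring

lemma div_le_indexRatio (hp : 1 < p) (ht : 0 < t) {θ : ℝ} (hθ0 : 0 ≤ θ) (hθ1 : θ ≤ 1) :
    θ / (t ^ (θ - 1) / (p - 1) + 1 / p) ≤ indexRatio (powDivLog p) t := by
  have hF := integral_pos hp ht
  have hLt := log_one_add_pos ht
  have hs : 0 < t ^ θ := by positivity
  have hLs := mul_log_one_add_le_log_one_add_rpow ht.le hθ0 hθ1
  have hupper := integral_le_div_log hp ht hs
  have hpow : t ^ θ * t ^ (p - 1) = t ^ p * t ^ (θ - 1) := by
    rw [← rpow_add ht, ← rpow_add ht]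
    ring_nf
  rw [le_div_iff₀ (log_one_add_pos hs)] at hupper
  rw [indexRatio_eq ht, div_le_div_iff₀ (by positivity) (by positivity)]
  calc θ * (log (1 + t) * ∫ τ in (0:ℝ)..t, powDivLog p τ)
      ≤ log (1 + t ^ θ) * ∫ τ in (0:ℝ)..t, powDivLog p τ := by
        rw [← mul_assoc]
        gcongr
    _ ≤ t ^ θ * t ^ (p - 1) / (p - 1) + t ^ p / p := by rw [mul_comm]; exact hupper
    _ = t ^ p * (t ^ (θ - 1) / (p - 1) + 1 / p) := by rw [hpow]; ring

lemma exists_indexRatio_lt (hp : 1 < p) {w : ℝ} (hw : p - 1 < w) :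
    ∃ t > 0, indexRatio (powDivLog p) t < w := by
  have hlim : Tendsto (fun t : ℝ => (p - 1) * ((t + 2) / 2)) (𝓝[>] 0) (𝓝 (p - 1)) := by
    have hcont : Continuous fun t : ℝ => (p - 1) * ((t + 2) / 2) := by fun_prop
    simpa using (hcont.tendsto 0).mono_left nhdsWithin_le_nhds
  obtain ⟨t, hlt, ht⟩ := ((hlim.eventually (gt_mem_nhds hw)).and self_mem_nhdsWithin).exists
  exact ⟨t, ht, (indexRatio_le_mul_add_two_div_two hp ht).trans_lt hlt⟩

lemma exists_lt_indexRatio (hp : 1 < p) {w : ℝ} (hw : w < p) :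
    ∃ t > 0, w < indexRatio (powDivLog p) t := by
  have hp0 : 0 < p := by linarith
  obtain ⟨θ, hθw, hθ1⟩ := exists_between (max_lt ((div_lt_one hp0).2 hw) one_pos)
  have hθ0 : 0 ≤ θ := (le_max_right _ _).trans hθw.le
  have hlim : Tendsto (fun t : ℝ => θ / (t ^ (θ - 1) / (p - 1) + 1 / p)) atTop
      (𝓝 (θ / (0 / (p - 1) + 1 / p))) := by
    have hpow : Tendsto (fun t : ℝ => t ^ (θ - 1)) atTop (𝓝 0) := by
      simpa using tendsto_rpow_neg_atTop (y := 1 - θ) (by linarith)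
    exact tendsto_const_nhds.div ((hpow.div_const _).add_const _) (by positivity)
  have hlt : w < θ / (0 / (p - 1) + 1 / p) := by
    rw [zero_div, zero_add, div_div_eq_mul_div, div_one]
    exact (div_lt_iff₀ hp0).1 ((le_max_left _ _).trans_lt hθw)
  obtain ⟨t, hwt, ht⟩ := ((hlim.eventually (lt_mem_nhds hlt)).and (eventually_gt_atTop 0)).exists
  exact ⟨t, ht, hwt.trans_le (div_le_indexRatio hp ht hθ0 hθ1.le)⟩

end powDivLog

lemma abs_rpow_mul_div_log_eq_powDivLog {p t : ℝ} (ht : 0 < t) :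
    |t| ^ (p - 2) * t / log (1 + |t|) = powDivLog p t := by
  rw [abs_of_pos ht, powDivLog, ← rpow_add_one ht.ne']
  ring_nf

/-- Example 3: for `φ(t) = |t|^{p−2}t / log(1+|t|)` (with `φ(0) = 0`) and
`p > 2`, the Simonenko indices of `Φ(t) = ∫₀ᵗ φ` are `φ⁻ = p − 1` and `φ⁺ = p`. -/
theorem stmt_17 (p : ℝ) (hp : 2 < p)
    (φ Φ : ℝ → ℝ)
    (hφ0 : φ 0 = 0)
    (hφ : ∀ t : ℝ, t ≠ 0 → φ t = |t| ^ (p - 2) * t / Real.log (1 + |t|))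
    (hΦ : ∀ t : ℝ, Φ t = ∫ τ in (0:ℝ)..t, φ τ) :
    sInf ((fun t => t * φ t / Φ t) '' Set.Ioi (0:ℝ)) = p - 1 ∧
    sSup ((fun t => t * φ t / Φ t) '' Set.Ioi (0:ℝ)) = p := by
  have hp1 : 1 < p := by linarith
  have hφ_eq : EqOn φ (powDivLog p) (Ici 0) := by
    intro τ hτ
    rcases (mem_Ici.1 hτ).eq_or_lt with rfl | hτ
    · simp [hφ0, powDivLog]
    · rw [hφ τ hτ.ne', abs_rpow_mul_div_log_eq_powDivLog hτ]
  have hratio : EqOn (fun t => t * φ t / Φ t) (indexRatio (powDivLog p)) (Ioi 0) := by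
    intro t (ht : 0 < t)
    have hint : ∫ τ in (0:ℝ)..t, φ τ = ∫ τ in (0:ℝ)..t, powDivLog p τ :=
      integral_congr (hφ_eq.mono fun τ hτ => (uIcc_of_le ht.le ▸ hτ).1)
    simp only [indexRatio, hΦ, hint, hφ_eq ht.le]
  rw [image_congr hratio]
  have hne := (nonempty_Ioi (a := (0:ℝ))).image (indexRatio (powDivLog p))
  constructor
  · refine csInf_eq_of_forall_ge_of_forall_gt_exists_lt hne
      (forall_mem_image.2 fun t ht => powDivLog.sub_one_le_indexRatio hp1 ht) fun w hw => ?_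
    obtain ⟨t, ht, hlt⟩ := powDivLog.exists_indexRatio_lt hp1 hw
    exact ⟨_, mem_image_of_mem _ ht, hlt⟩
  · refine csSup_eq_of_forall_le_of_forall_lt_exists_gt hne
      (forall_mem_image.2 fun t ht => powDivLog.indexRatio_le hp1 ht) fun w hw => ?_
    obtain ⟨t, ht, hlt⟩ := powDivLog.exists_lt_indexRatio hp1 hw
    exact ⟨_, mem_image_of_mem _ ht, hlt⟩
end
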